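/- Let A and B be bounded linear operators on H and t ∈ [0,1]. For the off-diagonal block operator (0 A; B 0) on H ⊕ H one has ‖(0 A; B 0)‖_{t-ber} ≤ max{t, 1−t}·( ‖A‖_ber + ‖B‖_ber ), where the t-Berezin norm is taken with respect to the family of unit vectors of H ⊕ H of the form (c₁ k_{λ₁}, c₂ k_{λ₂}) with λ₁, λ₂ ∈ Ω and |c₁|² + |c₂|² = 1. -/
import Mathlib


open ContinuousLinearMap
open scoped InnerProductSpace

/-- The `t`-Berezin norm of `A` with respect to the family `k` of (normalized reproducing
kernel) vectors. -/
noncomputable def tber {E : Type*} [NormedAddCommGroup E] [InnerProductSpace ℂ E]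
    [CompleteSpace E] {ι : Type*} (k : ι → E) (t : ℝ) (A : E →L[ℂ] E) : ℝ :=
  ⨆ p : ι × ι, (t * ‖⟪A (k p.1), k p.2⟫_ℂ‖ + (1 - t) * ‖⟪adjoint A (k p.1), k p.2⟫_ℂ‖)

/-- The Berezin norm of `A` with respect to the family `k`. -/
noncomputable def berNorm {E : Type*} [NormedAddCommGroup E] [InnerProductSpace ℂ E]
    {ι : Type*} (k : ι → E) (A : E →L[ℂ] E) : ℝ :=
  ⨆ p : ι × ι, ‖⟪A (k p.1), k p.2⟫_ℂ‖

/-- The Berezin number of `A` with respect to the family `k`. -/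
noncomputable def berNum {E : Type*} [NormedAddCommGroup E] [InnerProductSpace ℂ E]
    {ι : Type*} (k : ι → E) (A : E →L[ℂ] E) : ℝ :=
  ⨆ l : ι, ‖⟪A (k l), k l⟫_ℂ‖

/-- The modulus `|A| = (A*A)^(1/2)` of an operator, via the continuous functional calculus. -/
noncomputable def absOp {H : Type*} [NormedAddCommGroup H] [InnerProductSpace ℂ H]
    [CompleteSpace H] (A : H →L[ℂ] H) : H →L[ℂ] H :=
  cfc Real.sqrt (adjoint A * A)

/-- Real powers of a (positive) operator via the continuous functional calculus. -/
noncomputable def rpowOp {H : Type*} [NormedAddCommGroup H] [InnerProductSpace ℂ H]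
    [CompleteSpace H] (A : H →L[ℂ] H) (r : ℝ) : H →L[ℂ] H :=
  cfc (fun x : ℝ => x ^ r) A

/-- The family of unit vectors `(c₁ k_{λ₁}, c₂ k_{λ₂})` of `H ⊕ H` (realized as `WithLp 2 (H × H)`)
indexed by pairs of kernel indices and pairs of scalars with `|c₁|² + |c₂|² = 1`. -/
noncomputable def K2 {H : Type*} [NormedAddCommGroup H] [InnerProductSpace ℂ H]
    {Ω : Type*} (k : Ω → H) :
    {q : (Ω × Ω) × ℂ × ℂ // ‖q.2.1‖ ^ 2 + ‖q.2.2‖ ^ 2 = 1} → WithLp 2 (H × H) :=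
  fun q => (WithLp.equiv 2 (H × H)).symm (q.1.2.1 • k q.1.1.1, q.1.2.2 • k q.1.1.2)


lemma ber_bdd {H : Type*} [NormedAddCommGroup H] [InnerProductSpace ℂ H]
    {Ω : Type*} (k : Ω → H) (hk : ∀ l, ‖k l‖ = 1) (A : H →L[ℂ] H) :
    BddAbove (Set.range fun p : Ω × Ω => ‖⟪A (k p.1), k p.2⟫_ℂ‖) := by
  refine ⟨‖A‖, ?_⟩
  rintro x ⟨p, rfl⟩
  calc ‖⟪A (k p.1), k p.2⟫_ℂ‖ ≤ ‖A (k p.1)‖ * ‖k p.2‖ := norm_inner_le_norm _ _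
    _ ≤ ‖A‖ := by rw [hk]; simpa [hk] using A.le_opNorm (k p.1)

lemma ber_le {H : Type*} [NormedAddCommGroup H] [InnerProductSpace ℂ H]
    {Ω : Type*} (k : Ω → H) (hk : ∀ l, ‖k l‖ = 1) (A : H →L[ℂ] H) (l m : Ω) :
    ‖⟪A (k l), k m⟫_ℂ‖ ≤ berNorm k A :=
  le_ciSup (ber_bdd k hk A) (l, m)

theorem stmt10 {H : Type*} [NormedAddCommGroup H] [InnerProductSpace ℂ H] [CompleteSpace H]
    {Ω : Type*} [Nonempty Ω] (k : Ω → H) (hk : ∀ l, ‖k l‖ = 1)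
    (t : ℝ) (ht : t ∈ Set.Icc (0 : ℝ) 1) (A B : H →L[ℂ] H)
    (T : WithLp 2 (H × H) →L[ℂ] WithLp 2 (H × H))
    (hT : ∀ x y : H, T ((WithLp.equiv 2 (H × H)).symm (x, y)) =
      (WithLp.equiv 2 (H × H)).symm (A y, B x)) :
    tber (K2 k) t T ≤ max t (1 - t) * (berNorm k A + berNorm k B) := by
  
  obtain ⟨l0⟩ := ‹Nonempty Ω›
  have hne : Nonempty {q : (Ω × Ω) × ℂ × ℂ // ‖q.2.1‖ ^ 2 + ‖q.2.2‖ ^ 2 = 1} :=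
    ⟨⟨((l0, l0), (1, 0)), by norm_num⟩⟩
  have ha0 : 0 ≤ berNorm k A := le_trans (norm_nonneg _) (ber_le k hk A l0 l0)
  have hb0 : 0 ≤ berNorm k B := le_trans (norm_nonneg _) (ber_le k hk B l0 l0)
  set a := berNorm k A
  set b := berNorm k B
  have hval : ∀ (l1 l2 m1 m2 : Ω) (c1 c2 d1 d2 : ℂ),
      ⟪T ((WithLp.equiv 2 (H × H)).symm (c1 • k l1, c2 • k l2)),
        (WithLp.equiv 2 (H × H)).symm (d1 • k m1, d2 • k m2)⟫_ℂ
      = (starRingEnd ℂ) c2 * d1 * ⟪A (k l2), k m1⟫_ℂ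
        + (starRingEnd ℂ) c1 * d2 * ⟪B (k l1), k m2⟫_ℂ := by
    intro l1 l2 m1 m2 c1 c2 d1 d2
    rw [hT]
    simp [WithLp.prod_inner_apply, inner_smul_left, inner_smul_right, map_smul]
    ring
  have hbnd : ∀ (l1 l2 m1 m2 : Ω) (c1 c2 d1 d2 : ℂ),
      ‖⟪T ((WithLp.equiv 2 (H × H)).symm (c1 • k l1, c2 • k l2)),
        (WithLp.equiv 2 (H × H)).symm (d1 • k m1, d2 • k m2)⟫_ℂ‖
      ≤ ‖c2‖ * ‖d1‖ * a + ‖c1‖ * ‖d2‖ * b := by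
    intro l1 l2 m1 m2 c1 c2 d1 d2
    rw [hval]
    calc ‖(starRingEnd ℂ) c2 * d1 * ⟪A (k l2), k m1⟫_ℂ
          + (starRingEnd ℂ) c1 * d2 * ⟪B (k l1), k m2⟫_ℂ‖
        ≤ ‖(starRingEnd ℂ) c2 * d1 * ⟪A (k l2), k m1⟫_ℂ‖
          + ‖(starRingEnd ℂ) c1 * d2 * ⟪B (k l1), k m2⟫_ℂ‖ := norm_add_le _ _
      _ = ‖c2‖ * ‖d1‖ * ‖⟪A (k l2), k m1⟫_ℂ‖
          + ‖c1‖ * ‖d2‖ * ‖⟪B (k l1), k m2⟫_ℂ‖ := by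
          simp [norm_mul]
      _ ≤ ‖c2‖ * ‖d1‖ * a + ‖c1‖ * ‖d2‖ * b := by
          gcongr
          · exact ber_le k hk A l2 m1
          · exact ber_le k hk B l1 m2
  apply ciSup_le
  rintro ⟨⟨⟨⟨l1, l2⟩, c1, c2⟩, hc⟩, ⟨⟨⟨m1, m2⟩, d1, d2⟩, hd⟩⟩
  have h1 : ‖⟪T (K2 k ⟨((l1, l2), c1, c2), hc⟩), K2 k ⟨((m1, m2), d1, d2), hd⟩⟫_ℂ‖
      ≤ ‖c2‖ * ‖d1‖ * a + ‖c1‖ * ‖d2‖ * b := hbnd l1 l2 m1 m2 c1 c2 d1 d2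
  have h2 : ‖⟪adjoint T (K2 k ⟨((l1, l2), c1, c2), hc⟩), K2 k ⟨((m1, m2), d1, d2), hd⟩⟫_ℂ‖
      ≤ ‖d2‖ * ‖c1‖ * a + ‖d1‖ * ‖c2‖ * b := by
    rw [adjoint_inner_left, ← inner_conj_symm, RCLike.norm_conj]
    exact hbnd m1 m2 l1 l2 d1 d2 c1 c2
  have hc' : ‖c1‖ ^ 2 + ‖c2‖ ^ 2 = 1 := hc
  have hd' : ‖d1‖ ^ 2 + ‖d2‖ ^ 2 = 1 := hd
  have hs : ‖c2‖ * ‖d1‖ + ‖c1‖ * ‖d2‖ ≤ 1 := by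
    nlinarith [sq_nonneg (‖c2‖ - ‖d1‖), sq_nonneg (‖c1‖ - ‖d2‖)]
  have hM1 : t ≤ max t (1 - t) := le_max_left _ _
  have hM2 : 1 - t ≤ max t (1 - t) := le_max_right _ _
  have hM0 : (0 : ℝ) ≤ max t (1 - t) := le_trans ht.1 hM1
  have hX0 : 0 ≤ ‖c2‖ * ‖d1‖ * a + ‖c1‖ * ‖d2‖ * b := by positivity
  have hY0 : 0 ≤ ‖d2‖ * ‖c1‖ * a + ‖d1‖ * ‖c2‖ * b := by positivity
  calc t * ‖⟪T (K2 k ⟨((l1, l2), c1, c2), hc⟩), K2 k ⟨((m1, m2), d1, d2), hd⟩⟫_ℂ‖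
        + (1 - t) * ‖⟪adjoint T (K2 k ⟨((l1, l2), c1, c2), hc⟩),
            K2 k ⟨((m1, m2), d1, d2), hd⟩⟫_ℂ‖
      ≤ t * (‖c2‖ * ‖d1‖ * a + ‖c1‖ * ‖d2‖ * b)
        + (1 - t) * (‖d2‖ * ‖c1‖ * a + ‖d1‖ * ‖c2‖ * b) := by
        gcongr
        · exact ht.1
        · linarith [ht.2]
    _ ≤ max t (1 - t) * (‖c2‖ * ‖d1‖ * a + ‖c1‖ * ‖d2‖ * b)
        + max t (1 - t) * (‖d2‖ * ‖c1‖ * a + ‖d1‖ * ‖c2‖ * b) :=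
        add_le_add (mul_le_mul_of_nonneg_right hM1 hX0) (mul_le_mul_of_nonneg_right hM2 hY0)
    _ = max t (1 - t) * ((‖c2‖ * ‖d1‖ + ‖c1‖ * ‖d2‖) * (a + b)) := by ring
    _ ≤ max t (1 - t) * (1 * (a + b)) := by
        apply mul_le_mul_of_nonneg_left _ hM0
        exact mul_le_mul_of_nonneg_right hs (by linarith)
    _ = max t (1 - t) * (a + b) := by ring
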